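/- The vector φ = (φ_δ : δ ∈ ∂(𝒯), δ ≠ 𝒟^ρ) defined by φ_δ = E_δ(η^{−ζ^ℰ}, ζ^ℰ < ∞) is a right eigenvector of the restriction P* of P to the non-absorbing states, with eigenvalue η: for every δ ≠ 𝒟^ρ, ∑_{δ'≠𝒟^ρ} P_{δ,δ'} φ_{δ'} = η φ_δ. -/

import Mathlib

open scoped Classical
open Finset

universe u

section Meas
variable {I : Type u} [Fintype I] [DecidableEq I]
variable {A : I → Type*} [∀ i, Fintype (A i)] [∀ i, DecidableEq (A i)]

/-- The marginal of `μ` on the coordinate set `J`, viewed as a function of the full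
configuration that only depends on the coordinates in `J`. -/
noncomputable def marginal (μ : (∀ i, A i) → ℝ) (J : Finset I) : (∀ i, A i) → ℝ :=
  fun x => ∑ y : ∀ i, A i, if ∀ i ∈ J, y i = x i then μ y else 0

def IsProbMeasure (μ : (∀ i, A i) → ℝ) : Prop :=
  (∀ x, 0 ≤ μ x) ∧ ∑ x : ∀ i, A i, μ x = 1

/-- `ν` is (induced by) a probability measure on the coordinates in `L`:
it depends only on the coordinates in `L`, is nonnegative, and its total mass,
summed over the `L`-coordinates (the off-`L` coordinates being frozen), is `1`. -/
def IsProbOn (L : Finset I) (ν : (∀ i, A i) → ℝ) : Prop :=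
  (∀ x y : ∀ i, A i, (∀ i ∈ L, x i = y i) → ν x = ν y) ∧ (∀ x, 0 ≤ ν x) ∧
  (∀ x₀ : ∀ i, A i, ∑ y : ∀ i, A i, (if ∀ i, i ∉ L → y i = x₀ i then ν y else 0) = 1)

/-- The recombination transformation `Ξ[μ] = ∑_J ρ_J μ_J ⊗ μ_{Jᶜ}`. -/
noncomputable def Xi (ρ : Finset I → ℝ) (μ : (∀ i, A i) → ℝ) : (∀ i, A i) → ℝ :=
  fun x => ∑ J : Finset I, ρ J * (marginal μ J x * marginal μ Jᶜ x)

end Meas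

section Comb
variable {I : Type u} [Fintype I] [DecidableEq I]

/-- `ρ` is a probability vector on nonempty subsets of `I`. -/
def IsProbVec (ρ : Finset I → ℝ) : Prop :=
  ρ ∅ = 0 ∧ (∀ J, 0 ≤ ρ J) ∧ ∑ J : Finset I, ρ J = 1

end Comb

/-- `𝒴(𝒥_ρ)`: the closure of the support of `ρ` under nonempty intersections. -/
inductive inY {I : Type u} [Fintype I] [DecidableEq I] (ρ : Finset I → ℝ) : Finset I → Prop
  | base (J : Finset I) : 0 < ρ J → inY ρ J
  | inter (K J : Finset I) : inY ρ K → 0 < ρ J → (K ∩ J).Nonempty → inY ρ (K ∩ J)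

section Comb2
variable {I : Type u} [Fintype I] [DecidableEq I]

/-- `L` is an atom of the partition `𝒟^ρ` generated by the support of `ρ`. -/
def isAtomD (ρ : Finset I → ℝ) (L : Finset I) : Prop :=
  inY ρ L ∧ ∀ J : Finset I, 0 < ρ J → (J ∩ L = L ∨ J ∩ L = ∅)

/-- The coefficients `ρ^K_M` of Definition 2.2:
`ρ^K_M = ∑_{J ∈ 𝒥_ρ, J∩K = M} ρ_J` for `M ≠ K`, and
`ρ^K_K = ∑_{J ∈ 𝒥_ρ, J∩K = K ∨ J∩K = ∅} ρ_J`. -/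
noncomputable def rhoC (ρ : Finset I → ℝ) (K M : Finset I) : ℝ :=
  if M = K then
    ∑ J ∈ univ.filter (fun J : Finset I => 0 < ρ J ∧ (J ∩ K = K ∨ J ∩ K = ∅)), ρ J
  else
    ∑ J ∈ univ.filter (fun J : Finset I => 0 < ρ J ∧ J ∩ K = M), ρ J

/-- A finite-set partition of `I`. -/
def IsPartitionF (𝒟 : Finset (Finset I)) : Prop :=
  (∀ L ∈ 𝒟, L.Nonempty) ∧
  (∀ L ∈ 𝒟, ∀ L' ∈ 𝒟, L ≠ L' → L ∩ L' = ∅) ∧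
  𝒟.biUnion id = Finset.univ

end Comb2

section Trees
variable {I : Type u} [Fintype I] [DecidableEq I]

/-- The leaf of a branch of length `n`. -/
def leafOf {n : ℕ} (b : Fin (n + 1) → Finset I) : Finset I := b (Fin.last n)

end Trees

/-- The family `𝒯_n` of rooted dyadic trees of depth `n`, a tree being identified with its
(finite) set of branches; each branch is a tuple `(b_0, …, b_n)` of subsets of `I` with
`b_0 = I`.  In one step, every branch is extended either by repeating its leaf (not allowed
when `n = 0` and `ρ_I = 0`), or, when its leaf is not an atom of `𝒟^ρ`, by splitting the
leaf into the two nonempty parts `{ℓ∩J, ℓ∖J}` determined by some `J` in the support of `ρ`. -/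
inductive IsTree {I : Type u} [Fintype I] [DecidableEq I] (ρ : Finset I → ℝ) :
    (n : ℕ) → Finset (Fin (n + 1) → Finset I) → Prop
  | zero : IsTree ρ 0 {fun _ => Finset.univ}
  | succ {n : ℕ} {T : Finset (Fin (n + 1) → Finset I)}
      (ext : (Fin (n + 1) → Finset I) → Finset (Fin (n + 2) → Finset I))
      (hT : IsTree ρ n T)
      (hext : ∀ b ∈ T,
        (¬ (n = 0 ∧ ρ Finset.univ = 0) ∧ ext b = {Fin.snoc b (leafOf b)}) ∨
        (¬ isAtomD ρ (leafOf b) ∧ ∃ J : Finset I, 0 < ρ J ∧ J ≠ Finset.univ ∧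
          (leafOf b ∩ J).Nonempty ∧ (leafOf b \ J).Nonempty ∧
          ext b = {Fin.snoc b (leafOf b ∩ J), Fin.snoc b (leafOf b \ J)})) :
      IsTree ρ (n + 1) (T.biUnion ext)

section Trees2
variable {I : Type u} [Fintype I] [DecidableEq I]

/-- The weight `∏_{r=1}^{n} ρ^{b_{r-1}}_{b_r}` of a branch. -/
noncomputable def branchWeight (ρ : Finset I → ℝ) {n : ℕ} (b : Fin (n + 1) → Finset I) : ℝ :=
  ∏ r : Fin n, rhoC ρ (b r.castSucc) (b r.succ)

/-- The coefficient `q^n_δ`: total weight of the trees of depth `n` with leaf set `δ`. -/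
noncomputable def qcoef (ρ : Finset I → ℝ) (n : ℕ) (δ : Finset (Finset I)) : ℝ :=
  ∑ T : Finset (Fin (n + 1) → Finset I),
    if IsTree ρ n T ∧ T.image leafOf = δ then ∑ b ∈ T, branchWeight ρ b else 0

/-- `δ ∈ ∂(𝒯_n)`: `δ` is the leaf partition of some tree of depth `n`. -/
def LeafPart (ρ : Finset I → ℝ) (n : ℕ) (δ : Finset (Finset I)) : Prop :=
  ∃ T : Finset (Fin (n + 1) → Finset I), IsTree ρ n T ∧ T.image leafOf = δ

/-- `δ ∈ ∂(𝒯)`: `δ` is the leaf partition of some tree. -/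
def LeafPartAny (ρ : Finset I → ℝ) (δ : Finset (Finset I)) : Prop := ∃ n, LeafPart ρ n δ

/-- The relation `δ → δ'`: every atom of `δ` is either kept or split into two nonempty
parts by a set in the support of `ρ`. -/
def stepRel (ρ : Finset I → ℝ) (δ δ' : Finset (Finset I)) : Prop :=
  ∃ c : Finset I → Finset (Finset I),
    (∀ ℓ ∈ δ, c ℓ = {ℓ} ∨ ∃ J : Finset I, 0 < ρ J ∧ J ≠ Finset.univ ∧
      (ℓ ∩ J).Nonempty ∧ (ℓ \ J).Nonempty ∧ c ℓ = {ℓ ∩ J, ℓ \ J}) ∧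
    δ' = δ.biUnion c

/-- The transition matrix `P` of equation (23):
`P_{δ,δ'} = ∏_{ℓ∈δ∩δ'} ρ^ℓ_ℓ ⬝ ∏_{ℓ∈δ∖δ'} (ρ^ℓ_{ℓ_1} + ρ^ℓ_{ℓ_2})` when `δ → δ'`, else `0`;
here `ℓ_1, ℓ_2` are the parts of `ℓ` in `δ'`. -/
noncomputable def Pmat (ρ : Finset I → ℝ) (δ δ' : Finset (Finset I)) : ℝ :=
  if stepRel ρ δ δ' then
    (∏ ℓ ∈ δ ∩ δ', rhoC ρ ℓ ℓ) *
      ∏ ℓ ∈ δ \ δ', ∑ m ∈ δ'.filter (fun m => m ⊆ ℓ ∧ m.Nonempty), rhoC ρ ℓ m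
  else 0

/-- The distribution at time `n` of the Markov chain with transition matrix `P`
and initial distribution `ν`. -/
noncomputable def chainDist (ρ : Finset I → ℝ) (ν : Finset (Finset I) → ℝ) :
    ℕ → Finset (Finset I) → ℝ
  | 0 => ν
  | n + 1 => fun δ' => ∑ δ : Finset (Finset I), chainDist ρ ν n δ * Pmat ρ δ δ'

/-- The Dirac initial distribution at a state `δ0`. -/
noncomputable def diracAt (δ0 : Finset (Finset I)) : Finset (Finset I) → ℝ :=
  fun δ => if δ = δ0 then 1 else 0

/-- The partition `𝒟^ρ` (the set of atoms generated by the support of `ρ`). -/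
noncomputable def DrhoP (ρ : Finset I → ℝ) : Finset (Finset I) :=
  univ.filter (fun L => isAtomD ρ L)

/-- The partition `𝒟^{ρ,K}`: the atoms of `𝒟^ρ` disjoint from `K`, together with `K`. -/
noncomputable def DrhoK (ρ : Finset I → ℝ) (K : Finset I) : Finset (Finset I) :=
  univ.filter (fun L => isAtomD ρ L ∧ L ∩ K = ∅) ∪ {K}

/-- `∂(𝒯)^ℰ = {𝒟^{ρ,K} : K ∈ 𝒴(𝒥_ρ), ρ^K_K = η}`. -/
noncomputable def Efin (ρ : Finset I → ℝ) (η : ℝ) : Finset (Finset (Finset I)) :=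
  univ.filter (fun δ : Finset (Finset I) =>
    ∃ K : Finset I, inY ρ K ∧ rhoC ρ K K = η ∧ δ = DrhoK ρ K)

/-- The distribution at time `n` of the chain started at `δ0` and killed upon entering
`∂(𝒯)^ℰ`; for `γ ∈ ∂(𝒯)^ℰ`, `killedDist ρ η δ0 n γ = P_{δ0}(ζ^ℰ = n, Y_n = γ)`. -/
noncomputable def killedDist (ρ : Finset I → ℝ) (η : ℝ) (δ0 : Finset (Finset I)) :
    ℕ → Finset (Finset I) → ℝ
  | 0 => fun δ => if δ = δ0 then 1 else 0
  | n + 1 => fun δ' =>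
      ∑ δ ∈ univ.filter (fun δ : Finset (Finset I) => δ ∉ Efin ρ η),
        killedDist ρ η δ0 n δ * Pmat ρ δ δ'

/-- `φ_{δ0} = E_{δ0}(η^{-ζ^ℰ}, ζ^ℰ < ∞) = ∑_{j≥0} η^{-j} P_{δ0}(ζ^ℰ = j)`. -/
noncomputable def phiVec (ρ : Finset I → ℝ) (η : ℝ) (δ0 : Finset (Finset I)) : ℝ :=
  ∑' j : ℕ, (η ^ j)⁻¹ * ∑ γ ∈ Efin ρ η, killedDist ρ η δ0 j γ

end Trees2

/-!
Outside `∂(𝒯)^ℰ` the eigen-equation is the first-step decomposition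
`P_δ(ζ^ℰ = j + 1) = ∑_{δ'} P_{δ,δ'} P_{δ'}(ζ^ℰ = j)`, once the series defining `φ` are known to
converge. A step of the chain only refines a partition, so a state `δ` from which `𝒟^{ρ,K}` can be
reached is coarser than `𝒟^{ρ,K}`. Since `K ↦ ρ^K_K` is strictly decreasing along strict inclusions
starting in `𝒴(𝒥_ρ)`, the holding probability `P_{δ,δ} = ∏_{ℓ ∈ δ} ρ^ℓ_ℓ` of such a `δ ≠ 𝒟^{ρ,K}` is
below `η`; every other step strictly refines, and convergence follows by well-founded induction
along refinement.

On `δ = 𝒟^{ρ,K} ∈ ∂(𝒯)^ℰ` we have `φ_δ = 1` and `P_{δ,δ} = ρ^K_K = η`, while a successor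
`δ' ≠ δ` splits `K` and, by the same strict monotonicity, can never reach `∂(𝒯)^ℰ`: `φ_{δ'} = 0`.
-/

open Relation

section IndexedPartitions
variable {I β γ : Type*} [DecidableEq I]

/-- `IsPartitionF δ` is definitionally `IsPartitionOn δ id univ`. -/
def IsPartitionOn (s : Finset β) (f : β → Finset I) (A : Finset I) : Prop :=
  (∀ b ∈ s, (f b).Nonempty) ∧ (∀ b ∈ s, ∀ b' ∈ s, b ≠ b' → f b ∩ f b' = ∅) ∧ s.biUnion f = A

variable {s : Finset β} {f : β → Finset I} {A : Finset I}

theorem IsPartitionOn.subset (h : IsPartitionOn s f A) {b : β} (hb : b ∈ s) : f b ⊆ A :=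
  h.2.2 ▸ subset_biUnion_of_mem f hb

theorem IsPartitionOn.biUnion [DecidableEq γ] {ext : β → Finset γ} {g : γ → Finset I}
    (hs : IsPartitionOn s f A) (hext : ∀ b ∈ s, IsPartitionOn (ext b) g (f b)) :
    IsPartitionOn (s.biUnion ext) g A := by
  refine ⟨fun x hx => ?_, fun x hx y hy hxy => ?_, ?_⟩
  · obtain ⟨b, hb, hx⟩ := mem_biUnion.1 hx
    exact (hext b hb).1 x hx
  · obtain ⟨b, hb, hx⟩ := mem_biUnion.1 hx
    obtain ⟨b', hb', hy⟩ := mem_biUnion.1 hy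
    by_cases hbb : b = b'
    · subst hbb
      exact (hext b hb).2.1 x hx y hy hxy
    · rw [← subset_empty, ← hs.2.1 b hb b' hb' hbb]
      exact inter_subset_inter ((hext b hb).subset hx) ((hext b' hb').subset hy)
  · rw [biUnion_biUnion, ← hs.2.2]
    exact biUnion_congr rfl fun b hb => (hext b hb).2.2

theorem IsPartitionOn.image (h : IsPartitionOn s f A) : IsPartitionOn (s.image f) id A := by
  refine ⟨fun m hm => ?_, fun m hm m' hm' hne => ?_, ?_⟩
  · obtain ⟨b, hb, rfl⟩ := mem_image.1 hm
    exact h.1 b hb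
  · obtain ⟨b, hb, rfl⟩ := mem_image.1 hm
    obtain ⟨b', hb', rfl⟩ := mem_image.1 hm'
    exact h.2.1 b hb b' hb' (by rintro rfl; exact hne rfl)
  · rw [image_biUnion]
    exact h.2.2

theorem isPartitionOn_singleton {g : β → Finset I} {x : β} (hx : (g x).Nonempty) :
    IsPartitionOn {x} g (g x) := by
  refine ⟨?_, ?_, singleton_biUnion⟩
  · simpa using hx
  · simp

theorem isPartitionOn_pair [DecidableEq β] {g : β → Finset I} {x y : β} {ℓ J : Finset I}
    (hx : g x = ℓ ∩ J) (hy : g y = ℓ \ J) (h₁ : (ℓ ∩ J).Nonempty) (h₂ : (ℓ \ J).Nonempty) :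
    IsPartitionOn {x, y} g ℓ := by
  have hd : ℓ ∩ J ∩ (ℓ \ J) = ∅ := by
    ext i
    simp only [mem_inter, mem_sdiff, notMem_empty, iff_false]
    tauto
  refine ⟨?_, ?_, ?_⟩
  · simp only [mem_insert, mem_singleton]
    rintro b (rfl | rfl)
    exacts [hx ▸ h₁, hy ▸ h₂]
  · simp only [mem_insert, mem_singleton]
    rintro b (rfl | rfl) b' (rfl | rfl) hne
    · exact absurd rfl hne
    · rw [hx, hy, hd]
    · rw [hx, hy, inter_comm, hd]
    · exact absurd rfl hne
  · rw [biUnion_insert, singleton_biUnion, hx, hy, union_comm, sdiff_union_inter]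

end IndexedPartitions

section Refinement
variable {I : Type*}

def Refines (γ δ : Finset (Finset I)) : Prop := ∀ m ∈ γ, ∃ ℓ ∈ δ, m ⊆ ℓ

theorem Refines.refl (δ : Finset (Finset I)) : Refines δ δ := fun m hm => ⟨m, hm, subset_rfl⟩

theorem Refines.trans {γ δ ε : Finset (Finset I)} (h₁ : Refines γ δ) (h₂ : Refines δ ε) :
    Refines γ ε := by
  intro m hm
  obtain ⟨ℓ, hℓ, hmℓ⟩ := h₁ m hm
  obtain ⟨ℓ', hℓ', hℓℓ'⟩ := h₂ ℓ hℓ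
  exact ⟨ℓ', hℓ', hmℓ.trans hℓℓ'⟩

theorem wellFounded_strictRefines [Finite I] :
    WellFounded fun γ δ : Finset (Finset I) => Refines γ δ ∧ ¬ Refines δ γ := by
  have : IsTrans (Finset (Finset I)) fun γ δ => Refines γ δ ∧ ¬ Refines δ γ :=
    ⟨fun _ _ _ h₁ h₂ => ⟨h₁.1.trans h₂.1, fun h => h₂.2 (h.trans h₁.1)⟩⟩
  have : Std.Irrefl fun γ δ : Finset (Finset I) => Refines γ δ ∧ ¬ Refines δ γ :=
    ⟨fun _ h => h.2 h.1⟩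
  exact Finite.wellFounded_of_trans_of_irrefl _

end Refinement

section Partitions
variable {I : Type*} [Fintype I] [DecidableEq I] {γ δ : Finset (Finset I)}

theorem IsPartitionF.exists_mem (h : IsPartitionF δ) (i : I) : ∃ ℓ ∈ δ, i ∈ ℓ := by
  have hi : i ∈ δ.biUnion id := h.2.2.symm ▸ mem_univ i
  simpa using hi

theorem IsPartitionF.eq_of_mem (h : IsPartitionF δ) {ℓ ℓ' : Finset I} (hℓ : ℓ ∈ δ) (hℓ' : ℓ' ∈ δ)
    {i : I} (hi : i ∈ ℓ) (hi' : i ∈ ℓ') : ℓ = ℓ' := by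
  by_contra hne
  simpa [h.2.1 ℓ hℓ ℓ' hℓ' hne] using mem_inter.2 ⟨hi, hi'⟩

theorem IsPartitionF.exists_subset_of_refines (hγ : IsPartitionF γ) (hδ : IsPartitionF δ)
    (hr : Refines γ δ) {ℓ : Finset I} (hℓ : ℓ ∈ δ) {i : I} (hi : i ∈ ℓ) :
    ∃ m ∈ γ, i ∈ m ∧ m ⊆ ℓ := by
  obtain ⟨m, hm, him⟩ := hγ.exists_mem i
  obtain ⟨ℓ', hℓ', hmℓ'⟩ := hr m hm
  exact ⟨m, hm, him, hδ.eq_of_mem hℓ' hℓ (hmℓ' him) hi ▸ hmℓ'⟩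

theorem IsPartitionF.eq_of_subset (hδ : IsPartitionF δ) (hγ : IsPartitionF γ) (h : δ ⊆ γ) :
    δ = γ := by
  refine h.antisymm fun m hm => ?_
  obtain ⟨i, hi⟩ := hγ.1 m hm
  obtain ⟨ℓ, hℓ, hiℓ⟩ := hδ.exists_mem i
  rwa [hγ.eq_of_mem hm (h hℓ) hi hiℓ]

theorem IsPartitionF.eq_of_refines_of_refines (hγ : IsPartitionF γ) (hδ : IsPartitionF δ)
    (h₁ : Refines γ δ) (h₂ : Refines δ γ) : γ = δ := by
  refine hγ.eq_of_subset hδ fun m hm => ?_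
  obtain ⟨ℓ, hℓ, hmℓ⟩ := h₁ m hm
  obtain ⟨m', hm', hℓm'⟩ := h₂ ℓ hℓ
  obtain ⟨i, hi⟩ := hγ.1 m hm
  obtain rfl := hγ.eq_of_mem hm hm' hi (hℓm' (hmℓ hi))
  rwa [hmℓ.antisymm hℓm']

end Partitions

section Coefficients
variable {I : Type*} [Fintype I] [DecidableEq I] {ρ : Finset I → ℝ} {K L : Finset I}

theorem rhoC_self (ρ : Finset I → ℝ) (K : Finset I) :
    rhoC ρ K K = ∑ J ∈ univ.filter (fun J : Finset I => 0 < ρ J ∧ (J ∩ K = K ∨ J ∩ K = ∅)), ρ J :=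
  if_pos rfl

theorem rhoC_nonneg (hρ : ∀ J, 0 ≤ ρ J) (K M : Finset I) : 0 ≤ rhoC ρ K M := by
  unfold rhoC
  split <;> exact sum_nonneg fun J _ => hρ J

theorem rhoC_self_le_one (hρ : IsProbVec ρ) (K : Finset I) : rhoC ρ K K ≤ 1 := by
  rw [rhoC_self, ← hρ.2.2]
  exact sum_le_sum_of_subset_of_nonneg (subset_univ _) fun J _ _ => hρ.2.1 J

theorem rhoC_self_eq_one_of_isAtomD (hρ : IsProbVec ρ) (h : isAtomD ρ L) : rhoC ρ L L = 1 := by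
  rw [rhoC_self, ← hρ.2.2]
  exact sum_filter_of_ne fun J _ hJ => ⟨(hρ.2.1 J).lt_of_ne' hJ, h.2 J ((hρ.2.1 J).lt_of_ne' hJ)⟩

theorem isAtomD.not_split (h : isAtomD ρ L) {J : Finset I} (hJ : 0 < ρ J)
    (h₁ : (L ∩ J).Nonempty) (h₂ : (L \ J).Nonempty) : False := by
  rcases h.2 J hJ with h | h
  · obtain ⟨i, hi⟩ := h₂
    rw [mem_sdiff] at hi
    exact hi.2 (inter_eq_right.1 h hi.1)
  · rw [inter_comm, h] at h₁
    exact not_nonempty_empty h₁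

theorem inY.nonempty (hρ : ρ ∅ = 0) (h : inY ρ K) : K.Nonempty := by
  cases h with
  | base J hJ => exact nonempty_iff_ne_empty.2 fun hJe => hJ.ne' (hJe ▸ hρ)
  | inter _ _ _ _ hne => exact hne

theorem inY.exists_superset_not_superset (h : inY ρ K) {X : Finset I} (hX : ¬ X ⊆ K) :
    ∃ J, 0 < ρ J ∧ K ⊆ J ∧ ¬ X ⊆ J := by
  induction h with
  | base J hJ => exact ⟨J, hJ, subset_rfl, hX⟩
  | inter K J _ hJ _ ih =>
    by_cases hXK : X ⊆ K
    · exact ⟨J, hJ, inter_subset_right, fun hXJ => hX (subset_inter hXK hXJ)⟩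
    · obtain ⟨J', hJ', hKJ', hXJ'⟩ := ih hXK
      exact ⟨J', hJ', inter_subset_left.trans hKJ', hXJ'⟩

theorem inY.rhoC_self_pos (hρ : IsProbVec ρ) (h : inY ρ K) : 0 < rhoC ρ K K := by
  obtain ⟨J, hJ, hKJ⟩ : ∃ J, 0 < ρ J ∧ K ⊆ J := by
    cases h with
    | base _ hJ => exact ⟨_, hJ, subset_rfl⟩
    | inter _ J _ hJ _ => exact ⟨J, hJ, inter_subset_right⟩
  rw [rhoC_self]
  exact hJ.trans_le (single_le_sum (fun J' _ => hρ.2.1 J') (by simp [hJ, hKJ]))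

/-- The set `J` separating `L` from `K` counts in `ρ^K_K` but not in `ρ^L_L`. -/
theorem rhoC_self_lt_of_ssubset (hρ : IsProbVec ρ) (hK : inY ρ K) (hKL : K ⊂ L) :
    rhoC ρ L L < rhoC ρ K K := by
  obtain ⟨J, hJ, hKJ, hLJ⟩ := hK.exists_superset_not_superset (not_subset_of_ssubset hKL)
  obtain ⟨i, hi⟩ := hK.nonempty hρ.1
  rw [rhoC_self, rhoC_self]
  refine sum_lt_sum_of_subset (fun J' hJ' => ?_) (i := J) ?_ ?_ hJ fun J' _ _ => hρ.2.1 J'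
  · simp only [mem_filter, mem_univ, true_and] at hJ' ⊢
    refine ⟨hJ'.1, hJ'.2.imp (fun h => ?_) fun h => ?_⟩
    · exact inter_eq_right.2 (hKL.subset.trans (inter_eq_right.1 h))
    · exact subset_empty.1 (h ▸ inter_subset_inter_left hKL.subset)
  · simp [hJ, hKJ]
  · simp only [mem_filter, mem_univ, true_and, not_and, not_or]
    refine fun _ => ⟨fun h => hLJ (inter_eq_right.1 h), fun h => ?_⟩
    simpa [h] using mem_inter.2 ⟨hKJ hi, hKL.subset hi⟩

theorem rhoC_self_lt_one (hρ : IsProbVec ρ) (hK : inY ρ K) (hna : ¬ isAtomD ρ K) :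
    rhoC ρ K K < 1 := by
  obtain ⟨J, hJ, hsplit⟩ : ∃ J, 0 < ρ J ∧ ¬ (J ∩ K = K ∨ J ∩ K = ∅) := by
    by_contra! h
    exact hna ⟨hK, h⟩
  rw [rhoC_self, ← hρ.2.2]
  exact sum_lt_sum_of_subset (subset_univ _) (mem_univ J) (by simpa only [mem_filter, mem_univ, true_and, not_and] using fun _ => hsplit) hJ
    fun J' _ _ => hρ.2.1 J'

theorem mem_DrhoK : L ∈ DrhoK ρ K ↔ (isAtomD ρ L ∧ L ∩ K = ∅) ∨ L = K := by
  simp [DrhoK, or_comm]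

theorem self_mem_DrhoK (ρ : Finset I → ℝ) (K : Finset I) : K ∈ DrhoK ρ K :=
  mem_DrhoK.2 (Or.inr rfl)

theorem inY_of_mem_DrhoK (hK : inY ρ K) (hL : L ∈ DrhoK ρ K) : inY ρ L := by
  rcases mem_DrhoK.1 hL with ⟨hat, -⟩ | rfl
  exacts [hat.1, hK]

theorem mem_Efin {η : ℝ} {δ : Finset (Finset I)} :
    δ ∈ Efin ρ η ↔ ∃ K, inY ρ K ∧ rhoC ρ K K = η ∧ δ = DrhoK ρ K := by
  simp [Efin]

end Coefficients

section Steps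
variable {I : Type*} [Fintype I] [DecidableEq I] {ρ : Finset I → ℝ} {η : ℝ}
  {γ δ δ' : Finset (Finset I)}

theorem stepRel_self (ρ : Finset I → ℝ) (δ : Finset (Finset I)) : stepRel ρ δ δ :=
  ⟨fun ℓ => {ℓ}, fun _ _ => Or.inl rfl, biUnion_singleton_eq_self.symm⟩

theorem stepRel.refines (h : stepRel ρ δ δ') : Refines δ' δ := by
  obtain ⟨c, hc, rfl⟩ := h
  intro m hm
  obtain ⟨ℓ, hℓ, hm⟩ := mem_biUnion.1 hm
  refine ⟨ℓ, hℓ, ?_⟩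
  rcases hc ℓ hℓ with h | ⟨J, -, -, -, -, h⟩ <;>
    simp only [h, mem_insert, mem_singleton] at hm
  · exact hm.le
  · rcases hm with rfl | rfl
    exacts [inter_subset_left, sdiff_subset]

theorem stepRel.isPartitionF (hδ : IsPartitionF δ) (h : stepRel ρ δ δ') : IsPartitionF δ' := by
  obtain ⟨c, hc, rfl⟩ := h
  refine IsPartitionOn.biUnion (f := id) hδ fun ℓ hℓ => ?_
  rcases hc ℓ hℓ with h | ⟨J, -, -, h₁, h₂, h⟩ <;> rw [h]
  · exact isPartitionOn_singleton (hδ.1 ℓ hℓ)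
  · exact isPartitionOn_pair rfl rfl h₁ h₂

theorem stepRel.not_refines (hδ : IsPartitionF δ) (h : stepRel ρ δ δ') (hne : δ' ≠ δ) :
    ¬ Refines δ δ' :=
  fun h' => hne ((h.isPartitionF hδ).eq_of_refines_of_refines hδ h.refines h')

theorem stepRel.eq_of_forall_isAtomD (hδ : ∀ ℓ ∈ δ, isAtomD ρ ℓ) (h : stepRel ρ δ δ') :
    δ' = δ := by
  obtain ⟨c, hc, rfl⟩ := h
  refine (biUnion_congr rfl fun ℓ hℓ => ?_).trans biUnion_singleton_eq_self
  rcases hc ℓ hℓ with h | ⟨J, hJ, -, h₁, h₂, -⟩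
  exacts [h, ((hδ ℓ hℓ).not_split hJ h₁ h₂).elim]

theorem isPartitionF_of_reflTransGen (hδ : IsPartitionF δ) (h : ReflTransGen (stepRel ρ) δ γ) :
    IsPartitionF γ := by
  induction h with
  | refl => exact hδ
  | tail _ hstep ih => exact hstep.isPartitionF ih

theorem refines_of_reflTransGen (h : ReflTransGen (stepRel ρ) δ γ) : Refines γ δ := by
  induction h with
  | refl => exact Refines.refl δ
  | tail _ hstep ih => exact hstep.refines.trans ih

theorem Pmat_nonneg (hρ : ∀ J, 0 ≤ ρ J) (δ δ' : Finset (Finset I)) : 0 ≤ Pmat ρ δ δ' := by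
  unfold Pmat
  split
  · exact mul_nonneg (prod_nonneg fun ℓ _ => rhoC_nonneg hρ ℓ ℓ)
      (prod_nonneg fun ℓ _ => sum_nonneg fun m _ => rhoC_nonneg hρ ℓ m)
  · exact le_rfl

theorem stepRel_of_Pmat_ne_zero (h : Pmat ρ δ δ' ≠ 0) : stepRel ρ δ δ' := by
  by_contra hs
  exact h (if_neg hs)

theorem Pmat_self (ρ : Finset I → ℝ) (δ : Finset (Finset I)) :
    Pmat ρ δ δ = ∏ ℓ ∈ δ, rhoC ρ ℓ ℓ := by
  rw [Pmat, if_pos (stepRel_self ρ δ), inter_self, sdiff_self, bot_eq_empty, prod_empty, mul_one]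

theorem Pmat_self_le_prod (hρ : IsProbVec ρ) {t : Finset (Finset I)} (ht : t ⊆ δ) :
    Pmat ρ δ δ ≤ ∏ ℓ ∈ t, rhoC ρ ℓ ℓ := by
  rw [Pmat_self]
  exact prod_le_prod_of_subset_of_le_one ht (fun ℓ _ => rhoC_nonneg hρ.2.1 ℓ ℓ)
    fun ℓ _ _ => rhoC_self_le_one hρ ℓ

theorem Pmat_self_of_mem_Efin (hρ : IsProbVec ρ) (hE : δ ∈ Efin ρ η) : Pmat ρ δ δ = η := by
  obtain ⟨K, -, rfl, rfl⟩ := mem_Efin.1 hE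
  rw [Pmat_self, ← mul_prod_erase _ _ (self_mem_DrhoK ρ K), prod_eq_one, mul_one]
  intro L hL
  rcases mem_DrhoK.1 (mem_of_mem_erase hL) with ⟨hat, -⟩ | rfl
  exacts [rhoC_self_eq_one_of_isAtomD hρ hat, absurd rfl (ne_of_mem_erase hL)]

theorem Pmat_self_lt_of_refines (hρ : IsProbVec ρ) (hδ : IsPartitionF δ) (hγ : IsPartitionF γ)
    (hγE : γ ∈ Efin ρ η) (hr : Refines γ δ) (hne : δ ≠ γ) : Pmat ρ δ δ < η := by
  obtain ⟨K, hK, rfl, rfl⟩ := mem_Efin.1 hγE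
  obtain ⟨ℓK, hℓK, hKℓK⟩ := hr K (self_mem_DrhoK ρ K)
  rcases hKℓK.eq_or_ssubset with rfl | hss
  · obtain ⟨ℓ, hℓ, hℓγ⟩ := not_subset.1 (mt (hδ.eq_of_subset hγ) hne)
    obtain ⟨i, hi⟩ := hδ.1 ℓ hℓ
    obtain ⟨m, hm, -, hmℓ⟩ := hγ.exists_subset_of_refines hδ hr hℓ hi
    have hℓ1 : rhoC ρ ℓ ℓ < 1 :=
      (rhoC_self_lt_of_ssubset hρ (inY_of_mem_DrhoK hK hm)
        (hmℓ.ssubset_of_ne (by rintro rfl; exact hℓγ hm))).trans_le (rhoC_self_le_one hρ m)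
    have hKℓ : K ≠ ℓ := by
      rintro rfl
      exact hℓγ (self_mem_DrhoK ρ K)
    calc Pmat ρ δ δ ≤ ∏ ℓ' ∈ {K, ℓ}, rhoC ρ ℓ' ℓ' :=
          Pmat_self_le_prod hρ (insert_subset hℓK (singleton_subset_iff.2 hℓ))
      _ = rhoC ρ K K * rhoC ρ ℓ ℓ := prod_pair hKℓ
      _ < rhoC ρ K K := mul_lt_of_lt_one_right (hK.rhoC_self_pos hρ) hℓ1
  · calc Pmat ρ δ δ ≤ ∏ ℓ' ∈ {ℓK}, rhoC ρ ℓ' ℓ' :=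
          Pmat_self_le_prod hρ (singleton_subset_iff.2 hℓK)
      _ = rhoC ρ ℓK ℓK := prod_singleton _ _
      _ < rhoC ρ K K := rhoC_self_lt_of_ssubset hρ hK hss

theorem eq_of_refines_of_mem_Efin (hρ : IsProbVec ρ) (hη1 : η < 1) (hδ : δ ∈ Efin ρ η)
    (hγ : γ ∈ Efin ρ η) (hr : Refines γ δ) : γ = δ := by
  obtain ⟨K, -, hKη, rfl⟩ := mem_Efin.1 hδ
  obtain ⟨K', hK', hK'η, rfl⟩ := mem_Efin.1 hγ
  obtain ⟨m, hm, hK'm⟩ := hr K' (self_mem_DrhoK ρ K')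
  rcases hK'm.eq_or_ssubset with rfl | hss
  · rcases mem_DrhoK.1 hm with ⟨hat, -⟩ | rfl
    · linarith [rhoC_self_eq_one_of_isAtomD hρ hat]
    · rfl
  · have hlt := rhoC_self_lt_of_ssubset hρ hK' hss
    rcases mem_DrhoK.1 hm with ⟨hat, -⟩ | rfl
    · linarith [rhoC_self_eq_one_of_isAtomD hρ hat]
    · linarith

end Steps

section Hitting
variable {I : Type u} [Fintype I] [DecidableEq I] {ρ : Finset I → ℝ} {η : ℝ}
  {δ δ' : Finset (Finset I)}

/-- `hitProb ρ η δ j = P_δ(ζ^ℰ = j)`. -/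
noncomputable def hitProb (ρ : Finset I → ℝ) (η : ℝ) (δ : Finset (Finset I)) (j : ℕ) : ℝ :=
  ∑ γ ∈ Efin ρ η, killedDist ρ η δ j γ

def ReachesEfin (ρ : Finset I → ℝ) (η : ℝ) (δ : Finset (Finset I)) : Prop :=
  ∃ γ ∈ Efin ρ η, ReflTransGen (stepRel ρ) δ γ

theorem phiVec_eq_tsum_hitProb (ρ : Finset I → ℝ) (η : ℝ) (δ : Finset (Finset I)) :
    phiVec ρ η δ = ∑' j : ℕ, (η ^ j)⁻¹ * hitProb ρ η δ j := rfl

theorem killedDist_nonneg (hρ : ∀ J, 0 ≤ ρ J) (δ₀ : Finset (Finset I)) (n : ℕ)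
    (δ : Finset (Finset I)) : 0 ≤ killedDist ρ η δ₀ n δ := by
  induction n generalizing δ with
  | zero =>
    simp only [killedDist]
    split_ifs <;> norm_num
  | succ n ih => exact sum_nonneg fun x _ => mul_nonneg (ih x) (Pmat_nonneg hρ x δ)

theorem killedDist_succ_of_mem (h : δ₀ ∈ Efin ρ η) (n : ℕ) (δ : Finset (Finset I)) :
    killedDist ρ η δ₀ (n + 1) δ = 0 := by
  induction n generalizing δ with
  | zero =>
    refine sum_eq_zero fun x hx => ?_
    have hx : x ≠ δ₀ := by
      rintro rfl
      exact (mem_filter.1 hx).2 h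
    simp [killedDist, hx]
  | succ n ih => exact sum_eq_zero fun x _ => by rw [ih x, zero_mul]

theorem killedDist_succ_of_not_mem (h : δ₀ ∉ Efin ρ η) (n : ℕ) (γ : Finset (Finset I)) :
    killedDist ρ η δ₀ (n + 1) γ = ∑ δ', Pmat ρ δ₀ δ' * killedDist ρ η δ' n γ := by
  induction n generalizing γ with
  | zero => simp [killedDist, h]
  | succ n ih =>
    rw [killedDist]
    simp_rw [ih, sum_mul, killedDist, mul_sum]
    rw [sum_comm]
    exact sum_congr rfl fun _ _ => sum_congr rfl fun _ _ => mul_assoc _ _ _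

theorem hitProb_nonneg (hρ : ∀ J, 0 ≤ ρ J) (δ : Finset (Finset I)) (j : ℕ) :
    0 ≤ hitProb ρ η δ j :=
  sum_nonneg fun γ _ => killedDist_nonneg hρ δ j γ

theorem hitProb_zero (ρ : Finset I → ℝ) (η : ℝ) (δ : Finset (Finset I)) :
    hitProb ρ η δ 0 = if δ ∈ Efin ρ η then 1 else 0 :=
  sum_ite_eq' (Efin ρ η) δ fun _ => (1 : ℝ)

theorem hitProb_succ_of_mem (h : δ ∈ Efin ρ η) (j : ℕ) : hitProb ρ η δ (j + 1) = 0 :=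
  sum_eq_zero fun γ _ => killedDist_succ_of_mem h j γ

theorem hitProb_succ_of_not_mem (h : δ ∉ Efin ρ η) (j : ℕ) :
    hitProb ρ η δ (j + 1) = ∑ δ', Pmat ρ δ δ' * hitProb ρ η δ' j := by
  simp_rw [hitProb, killedDist_succ_of_not_mem h, mul_sum]
  exact sum_comm

theorem reachesEfin_of_hitProb_ne_zero {j : ℕ} (h : hitProb ρ η δ j ≠ 0) : ReachesEfin ρ η δ := by
  induction j generalizing δ with
  | zero =>
    rw [hitProb_zero] at h
    exact ⟨δ, by_contra fun hE => h (if_neg hE), ReflTransGen.refl⟩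
  | succ j ih =>
    by_cases hE : δ ∈ Efin ρ η
    · exact ⟨δ, hE, ReflTransGen.refl⟩
    rw [hitProb_succ_of_not_mem hE] at h
    obtain ⟨δ', -, h'⟩ := exists_ne_zero_of_sum_ne_zero h
    obtain ⟨γ, hγ, hpath⟩ := ih (right_ne_zero_of_mul h')
    exact ⟨γ, hγ, .head (stepRel_of_Pmat_ne_zero (left_ne_zero_of_mul h')) hpath⟩

theorem hitProb_eq_zero_of_not_reachesEfin (h : ¬ ReachesEfin ρ η δ) (j : ℕ) :
    hitProb ρ η δ j = 0 :=
  by_contra fun hj => h (reachesEfin_of_hitProb_ne_zero hj)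

theorem phiVec_eq_one_of_mem (h : δ ∈ Efin ρ η) : phiVec ρ η δ = 1 := by
  rw [phiVec_eq_tsum_hitProb, tsum_eq_single 0]
  · simp [hitProb_zero, h]
  · intro j hj
    obtain ⟨j, rfl⟩ := Nat.exists_eq_succ_of_ne_zero hj
    rw [hitProb_succ_of_mem h, mul_zero]

theorem phiVec_eq_zero_of_not_reachesEfin (h : ¬ ReachesEfin ρ η δ) : phiVec ρ η δ = 0 := by
  rw [phiVec_eq_tsum_hitProb]
  simp [hitProb_eq_zero_of_not_reachesEfin h]

theorem ReachesEfin.Pmat_self_lt (hρ : IsProbVec ρ) (hδ : IsPartitionF δ)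
    (hR : ReachesEfin ρ η δ) (hE : δ ∉ Efin ρ η) : Pmat ρ δ δ < η := by
  obtain ⟨γ, hγ, hpath⟩ := hR
  exact Pmat_self_lt_of_refines hρ hδ (isPartitionF_of_reflTransGen hδ hpath) hγ
    (refines_of_reflTransGen hpath) (by rintro rfl; exact hE hγ)

theorem not_reachesEfin_of_stepRel (hρ : IsProbVec ρ) (hη1 : η < 1) (hE : δ ∈ Efin ρ η)
    (hδ : IsPartitionF δ) (h : stepRel ρ δ δ') (hne : δ' ≠ δ) : ¬ ReachesEfin ρ η δ' := by
  rintro ⟨γ, hγ, hpath⟩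
  obtain rfl := eq_of_refines_of_mem_Efin hρ hη1 hE hγ
    ((refines_of_reflTransGen hpath).trans h.refines)
  exact h.not_refines hδ hne (refines_of_reflTransGen hpath)

theorem not_reachesEfin_DrhoP (hρ : IsProbVec ρ) (hη1 : η ≠ 1) : ¬ ReachesEfin ρ η (DrhoP ρ) := by
  rintro ⟨γ, hγ, hpath⟩
  obtain rfl : γ = DrhoP ρ := by
    clear hγ
    induction hpath with
    | refl => rfl
    | tail _ hstep ih =>
      subst ih
      exact hstep.eq_of_forall_isAtomD fun ℓ hℓ => (mem_filter.1 hℓ).2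
  obtain ⟨K, -, hKη, hD⟩ := mem_Efin.1 hγ
  have hK : K ∈ DrhoP ρ := hD ▸ self_mem_DrhoK ρ K
  exact hη1 (hKη ▸ rhoC_self_eq_one_of_isAtomD hρ (mem_filter.1 hK).2)

end Hitting

theorem summable_of_succ_le_mul_add {a b : ℕ → ℝ} {q : ℝ} (ha : ∀ j, 0 ≤ a j) (hb : ∀ j, 0 ≤ b j)
    (hbs : Summable b) (hq : q < 1) (h : ∀ j, a (j + 1) ≤ q * a j + b j) : Summable a := by
  refine summable_of_sum_range_le ha (c := (a 0 + ∑' j, b j) / (1 - q)) fun n => ?_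
  have hmono : ∑ j ∈ range n, a j ≤ ∑ j ∈ range (n + 1), a j :=
    sum_le_sum_of_subset_of_nonneg (range_subset_range.2 n.le_succ) fun j _ _ => ha j
  have hrec : ∑ j ∈ range (n + 1), a j ≤ a 0 + (q * ∑ j ∈ range n, a j + ∑' j, b j) := by
    rw [sum_range_succ', add_comm, mul_sum]
    gcongr
    calc ∑ j ∈ range n, a (j + 1) ≤ ∑ j ∈ range n, (q * a j + b j) := sum_le_sum fun j _ => h j
      _ ≤ _ := by
        rw [sum_add_distrib]
        gcongr
        exact hbs.sum_le_tsum _ fun j _ => hb j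
  rw [le_div_iff₀ (by linarith)]
  nlinarith

section Eigenvector
variable {I : Type u} [Fintype I] [DecidableEq I] {ρ : Finset I → ℝ} {η : ℝ}
  {δ : Finset (Finset I)}

theorem summable_hitProb (hρ : IsProbVec ρ) (hη0 : 0 < η) (hδ : IsPartitionF δ) :
    Summable fun j => (η ^ j)⁻¹ * hitProb ρ η δ j := by
  induction δ using (wellFounded_strictRefines (I := I)).induction with
  | _ δ ih => ?_
  by_cases hE : δ ∈ Efin ρ η
  · refine summable_of_ne_finset_zero (s := {0}) fun j hj => ?_
    obtain ⟨j, rfl⟩ := Nat.exists_eq_succ_of_ne_zero (by simpa using hj)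
    rw [hitProb_succ_of_mem hE, mul_zero]
  by_cases hR : ReachesEfin ρ η δ
  swap
  · simp [hitProb_eq_zero_of_not_reachesEfin hR]
  have hsucc : ∀ δ' ∈ univ.erase δ,
      Summable fun j => Pmat ρ δ δ' * ((η ^ j)⁻¹ * hitProb ρ η δ' j) := by
    intro δ' hδ'
    by_cases hP : Pmat ρ δ δ' = 0
    · simp [hP]
    have hstep := stepRel_of_Pmat_ne_zero hP
    exact (ih δ' ⟨hstep.refines, hstep.not_refines hδ (ne_of_mem_erase hδ')⟩
      (hstep.isPartitionF hδ)).mul_left _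
  refine summable_of_succ_le_mul_add (q := Pmat ρ δ δ / η)
    (fun j => mul_nonneg (by positivity) (hitProb_nonneg hρ.2.1 δ j))
    (fun j => mul_nonneg (by positivity) (sum_nonneg fun δ' _ => mul_nonneg
      (Pmat_nonneg hρ.2.1 δ δ') (mul_nonneg (by positivity) (hitProb_nonneg hρ.2.1 δ' j))))
    ((summable_sum hsucc).mul_left η⁻¹) ((div_lt_one hη0).2 (hR.Pmat_self_lt hρ hδ hE))
    fun j => le_of_eq ?_
  rw [hitProb_succ_of_not_mem hE, ← add_sum_erase _ _ (mem_univ δ), pow_succ]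
  field_simp
  rw [← sum_div, mul_div_cancel₀ _ (by positivity)]

theorem sum_Pmat_mul_phiVec_of_not_mem (hρ : IsProbVec ρ) (hη0 : 0 < η) (hδ : IsPartitionF δ)
    (hE : δ ∉ Efin ρ η) : ∑ δ', Pmat ρ δ δ' * phiVec ρ η δ' = η * phiVec ρ η δ := by
  have hsum : ∀ δ', Summable fun j => Pmat ρ δ δ' * ((η ^ j)⁻¹ * hitProb ρ η δ' j) := by
    intro δ'
    by_cases hP : Pmat ρ δ δ' = 0
    · simp [hP]
    exact (summable_hitProb hρ hη0 ((stepRel_of_Pmat_ne_zero hP).isPartitionF hδ)).mul_left _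
  calc ∑ δ', Pmat ρ δ δ' * phiVec ρ η δ'
      = ∑' j, ∑ δ', Pmat ρ δ δ' * ((η ^ j)⁻¹ * hitProb ρ η δ' j) := by
        simp_rw [phiVec_eq_tsum_hitProb, ← tsum_mul_left]
        exact (Summable.tsum_finsetSum fun δ' _ => hsum δ').symm
    _ = ∑' j, η * ((η ^ (j + 1))⁻¹ * hitProb ρ η δ (j + 1)) := by
        refine tsum_congr fun j => ?_
        rw [hitProb_succ_of_not_mem hE, mul_sum, mul_sum]
        refine sum_congr rfl fun δ' _ => ?_
        rw [pow_succ]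
        field_simp
    _ = η * phiVec ρ η δ := by
        rw [tsum_mul_left, phiVec_eq_tsum_hitProb,
          (summable_hitProb hρ hη0 hδ).tsum_eq_zero_add, hitProb_zero, if_neg hE, mul_zero,
          zero_add]

theorem sum_Pmat_mul_phiVec_of_mem (hρ : IsProbVec ρ) (hη1 : η < 1) (hδ : IsPartitionF δ)
    (hE : δ ∈ Efin ρ η) : ∑ δ', Pmat ρ δ δ' * phiVec ρ η δ' = η * phiVec ρ η δ := by
  rw [sum_eq_single δ, phiVec_eq_one_of_mem hE, Pmat_self_of_mem_Efin hρ hE]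
  · intro δ' _ hne
    by_cases hP : Pmat ρ δ δ' = 0
    · rw [hP, zero_mul]
    rw [phiVec_eq_zero_of_not_reachesEfin (not_reachesEfin_of_stepRel hρ hη1 hE hδ
      (stepRel_of_Pmat_ne_zero hP) hne), mul_zero]
  · exact fun h => (h (mem_univ δ)).elim

theorem sum_Pmat_mul_phiVec (hρ : IsProbVec ρ) (hη0 : 0 < η) (hη1 : η < 1)
    (hδ : IsPartitionF δ) : ∑ δ', Pmat ρ δ δ' * phiVec ρ η δ' = η * phiVec ρ η δ := by
  by_cases hE : δ ∈ Efin ρ η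
  exacts [sum_Pmat_mul_phiVec_of_mem hρ hη1 hδ hE, sum_Pmat_mul_phiVec_of_not_mem hρ hη0 hδ hE]

end Eigenvector

section Trees

theorem IsProbVec.univ_nonempty {I : Type*} [Fintype I] {ρ : Finset I → ℝ} (hρ : IsProbVec ρ) :
    (univ : Finset I).Nonempty := by
  obtain ⟨J, -, hJ⟩ := exists_ne_zero_of_sum_ne_zero (hρ.2.2.symm ▸ one_ne_zero)
  obtain ⟨i, -⟩ : J.Nonempty := nonempty_iff_ne_empty.2 fun hJe => hJ (hJe ▸ hρ.1)
  exact ⟨i, mem_univ i⟩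

theorem leafOf_snoc {I : Type*} {n : ℕ} (b : Fin (n + 1) → Finset I) (x : Finset I) :
    leafOf (Fin.snoc b x : Fin (n + 2) → Finset I) = x :=
  Fin.snoc_last _ _

variable {I : Type u} [Fintype I] [DecidableEq I] {ρ : Finset I → ℝ}

theorem IsTree.isPartitionOn (hρ : IsProbVec ρ) {n : ℕ} {T : Finset (Fin (n + 1) → Finset I)}
    (hT : IsTree ρ n T) : IsPartitionOn T leafOf univ := by
  induction hT with
  | zero => exact isPartitionOn_singleton (g := leafOf) hρ.univ_nonempty
  | @succ m _ ext _ hext ih =>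
    refine ih.biUnion fun b hb => ?_
    rcases hext b hb with ⟨-, h⟩ | ⟨-, J, -, -, h₁, h₂, h⟩ <;> rw [h]
    · simpa only [leafOf_snoc] using
        isPartitionOn_singleton (g := leafOf)
          (x := (Fin.snoc b (leafOf b) : Fin (m + 2) → Finset I))
          (by rw [leafOf_snoc]; exact ih.1 b hb)
    · exact isPartitionOn_pair (leafOf_snoc _ _) (leafOf_snoc _ _) h₁ h₂

theorem LeafPartAny.isPartitionF (hρ : IsProbVec ρ) {δ : Finset (Finset I)}
    (h : LeafPartAny ρ δ) : IsPartitionF δ := by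
  obtain ⟨n, T, hT, rfl⟩ := h
  exact (hT.isPartitionOn hρ).image

end Trees

theorem phiVec_right_eigenvector_general {I : Type u} [Fintype I] [DecidableEq I]
    (ρ : Finset I → ℝ) (hρ : IsProbVec ρ) (η : ℝ)
    (hη : IsGreatest {x : ℝ | ∃ K : Finset I, inY ρ K ∧ ¬ isAtomD ρ K ∧ x = rhoC ρ K K} η) :
    ∀ δ : Finset (Finset I), LeafPartAny ρ δ → δ ≠ DrhoP ρ →
      ∑ δ' ∈ univ.filter (fun δ' : Finset (Finset I) => δ' ≠ DrhoP ρ),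
        Pmat ρ δ δ' * phiVec ρ η δ' = η * phiVec ρ η δ := by
  obtain ⟨K, hK, hKna, rfl⟩ := hη.1
  have hη0 : 0 < rhoC ρ K K := hK.rhoC_self_pos hρ
  have hη1 : rhoC ρ K K < 1 := rhoC_self_lt_one hρ hK hKna
  intro δ hδ _
  rw [filter_ne', sum_erase _ (by rw [phiVec_eq_zero_of_not_reachesEfin
    (not_reachesEfin_DrhoP hρ hη1.ne), mul_zero])]
  exact sum_Pmat_mul_phiVec hρ hη0 hη1 (hδ.isPartitionF hρ)

/-- `φ_δ = E_δ(η^{-ζ^ℰ}, ζ^ℰ < ∞)` is a right eigenvector of the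
restriction `P*` of `P` to the non-absorbing states, with eigenvalue `η`. -/
theorem phiVec_right_eigenvector {I : Type u} [Fintype I] [DecidableEq I]
    (ρ : Finset I → ℝ) (hρ : IsProbVec ρ) (hI : ρ Finset.univ < 1) (η : ℝ)
    (hη : IsGreatest {x : ℝ | ∃ K : Finset I, inY ρ K ∧ ¬ isAtomD ρ K ∧ x = rhoC ρ K K} η) :
    ∀ δ : Finset (Finset I), LeafPartAny ρ δ → δ ≠ DrhoP ρ →
      ∑ δ' ∈ univ.filter (fun δ' : Finset (Finset I) => δ' ≠ DrhoP ρ),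
        Pmat ρ δ δ' * phiVec ρ η δ' = η * phiVec ρ η δ :=
  phiVec_right_eigenvector_general ρ hρ η hη
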